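/- Let B be an m×m matrix over F_2 with irreducible characteristic polynomial p of Fibonacci index d+1 where d = 2^m (i.e., d+1 is the least n ≥ 1 with p(x) dividing F_n(x) over F_2). If C = [[B, I_m], [I_m, 0_m]], then C^{d+1} = I_{2m}, and C^j ≠ I_{2m} for 1 ≤ j ≤ d. -/
import Mathlib

open Polynomial Matrix

noncomputable def fibPoly (R : Type*) [CommRing R] : ℕ → Polynomial R
  | 0 => 0
  | 1 => 1
  | (n + 2) => X * fibPoly R (n + 1) + fibPoly R n

lemma fib_rec (R : Type*) [CommRing R] (n : ℕ) :
    fibPoly R (n + 2) = X * fibPoly R (n + 1) + fibPoly R n := rfl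

lemma cassini (n : ℕ) :
    fibPoly (ZMod 2) (n + 2) * fibPoly (ZMod 2) n + (fibPoly (ZMod 2) (n + 1)) ^ 2 = 1 := by
  induction n with
  | zero => simp [fibPoly]
  | succ n ih =>
    have h2 : (2 : Polynomial (ZMod 2)) = 0 := by
      rw [show (2 : (ZMod 2)[X]) = ((2 : ℕ) : (ZMod 2)[X]) by norm_cast,
        ← Polynomial.C_eq_natCast]
      norm_num
      decide
    rw [show n + 1 + 2 = n + 3 from rfl, show n + 1 + 1 = n + 2 from rfl,
      show n + 3 = (n + 1) + 2 from rfl, fib_rec (ZMod 2) (n + 1), fib_rec (ZMod 2) n] at *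
    linear_combination ih + X * fibPoly (ZMod 2) (n + 1) *
      (X * fibPoly (ZMod 2) (n + 1) + fibPoly (ZMod 2) n) * h2

lemma pow_formula (m : ℕ) (B : Matrix (Fin m) (Fin m) (ZMod 2)) (n : ℕ) :
    (fromBlocks B 1 1 0 : Matrix (Fin m ⊕ Fin m) (Fin m ⊕ Fin m) (ZMod 2)) ^ (n + 1) =
      fromBlocks (aeval B (fibPoly (ZMod 2) (n + 2))) (aeval B (fibPoly (ZMod 2) (n + 1)))
        (aeval B (fibPoly (ZMod 2) (n + 1))) (aeval B (fibPoly (ZMod 2) n)) := by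
  have comm : ∀ f : Polynomial (ZMod 2), aeval B f * B = B * aeval B f := by
    intro f
    have h1 : aeval B (f * X) = aeval B f * B := by simp [_root_.map_mul]
    have h2 : aeval B (X * f) = B * aeval B f := by simp [_root_.map_mul]
    rw [← h1, ← h2, mul_comm]
  induction n with
  | zero => simp [fibPoly, fib_rec]
  | succ n ih =>
    rw [pow_succ, ih, Matrix.fromBlocks_multiply]
    congr 1 <;> simp [fib_rec, map_add, _root_.map_mul, add_mul, mul_add, mul_assoc, comm]

theorem stmt_7 (m : ℕ) (B : Matrix (Fin m) (Fin m) (ZMod 2))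
    (hirr : Irreducible B.charpoly)
    (hdvd : B.charpoly ∣ fibPoly (ZMod 2) (2 ^ m + 1))
    (hleast : ∀ n : ℕ, 1 ≤ n → n < 2 ^ m + 1 → ¬ B.charpoly ∣ fibPoly (ZMod 2) n)
    (C : Matrix (Fin m ⊕ Fin m) (Fin m ⊕ Fin m) (ZMod 2))
    (hC : C = Matrix.fromBlocks B 1 1 0) :
    C ^ (2 ^ m + 1) = 1 ∧ ∀ j : ℕ, 1 ≤ j → j ≤ 2 ^ m → C ^ j ≠ 1 := by
  rcases Nat.eq_zero_or_pos m with rfl | hm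
  · exfalso
    have : B.charpoly = 1 := Matrix.det_fin_zero
    exact hirr.not_isUnit (this ▸ isUnit_one)
  haveI : NeZero m := ⟨hm.ne'⟩
  set p := B.charpoly with hp
  have hInt : IsIntegral (ZMod 2) B := ⟨p, B.charpoly_monic, B.aeval_self_charpoly⟩
  have hmdvd : minpoly (ZMod 2) B ∣ p := minpoly.dvd _ _ B.aeval_self_charpoly
  have hpdvdm : p ∣ minpoly (ZMod 2) B := by
    obtain ⟨c, hc⟩ := hmdvd
    rcases hirr.isUnit_or_isUnit hc with h | h
    · exfalso
      have h1 : minpoly (ZMod 2) B = 1 := (minpoly.monic hInt).eq_one_of_isUnit h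
      have h2 := minpoly.aeval (ZMod 2) B
      rw [h1] at h2
      simp at h2
    · exact (Associated.symm ⟨h.unit, by rw [hc]; rfl⟩).dvd
  have key : ∀ q : Polynomial (ZMod 2), aeval B q = 0 ↔ p ∣ q := by
    intro q
    constructor
    · intro hq
      exact hpdvdm.trans (minpoly.dvd _ _ hq)
    · rintro ⟨r, rfl⟩
      rw [_root_.map_mul, show (aeval B) p = 0 from B.aeval_self_charpoly, zero_mul]
  set d := 2 ^ m with hd
  have hF1 : aeval B (fibPoly (ZMod 2) (d + 1)) = 0 := (key _).2 hdvd
  have h11 : (1 : Matrix (Fin m) (Fin m) (ZMod 2)) + 1 = 0 := by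
    ext i j
    by_cases h : i = j <;> simp [Matrix.one_apply, h] <;> decide
  have hFd : aeval B (fibPoly (ZMod 2) d) = 1 := by
    have hcas := congrArg (aeval B) (cassini d)
    rw [map_add, _root_.map_mul, _root_.map_pow, hF1, _root_.map_one] at hcas
    have hFd2 : aeval B (fibPoly (ZMod 2) (d + 2)) = aeval B (fibPoly (ZMod 2) d) := by
      rw [fib_rec, map_add, _root_.map_mul, aeval_X, hF1, mul_zero, zero_add]
    rw [hFd2] at hcas
    have hsq : aeval B (fibPoly (ZMod 2) d) * aeval B (fibPoly (ZMod 2) d) = 1 := by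
      simpa using hcas
    have hpol2 : (2 : Polynomial (ZMod 2)) = 0 := by
      rw [show (2 : (ZMod 2)[X]) = ((2 : ℕ) : (ZMod 2)[X]) by norm_cast,
        ← Polynomial.C_eq_natCast]
      norm_num
      decide
    have hz : aeval B ((fibPoly (ZMod 2) d + 1) ^ 2) = 0 := by
      have hexp : (fibPoly (ZMod 2) d + 1) ^ 2 =
          fibPoly (ZMod 2) d ^ 2 + 1 := by
        linear_combination fibPoly (ZMod 2) d * hpol2
      rw [hexp, map_add, _root_.map_pow, _root_.map_one, sq, hsq, h11]
    have hdvd2 : p ∣ (fibPoly (ZMod 2) d + 1) ^ 2 := (key _).1 hz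
    have hprime : Prime p := hirr.prime
    have hpd : p ∣ fibPoly (ZMod 2) d + 1 := hprime.dvd_of_dvd_pow hdvd2
    have h0 : aeval B (fibPoly (ZMod 2) d + 1) = 0 := (key _).2 hpd
    rw [map_add, _root_.map_one] at h0
    have : aeval B (fibPoly (ZMod 2) d) + 1 = 1 + 1 := by rw [h0, h11]
    exact add_right_cancel this
  have hFd2 : aeval B (fibPoly (ZMod 2) (d + 2)) = 1 := by
    rw [fib_rec, map_add, _root_.map_mul, aeval_X, hF1, mul_zero, zero_add, hFd]
  constructor
  · rw [hC, pow_formula m B d, hF1, hFd, hFd2, Matrix.fromBlocks_one]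
  · intro j hj1 hj2 hCj
    obtain ⟨n, rfl⟩ : ∃ n, j = n + 1 := ⟨j - 1, by omega⟩
    rw [hC, pow_formula m B n, ← Matrix.fromBlocks_one] at hCj
    have hb := congrArg Matrix.toBlocks₁₂ hCj
    rw [Matrix.toBlocks_fromBlocks₁₂, Matrix.toBlocks_fromBlocks₁₂] at hb
    exact hleast (n + 1) (by omega) (by omega) ((key _).1 hb)
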